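/- Under the conditions A ≥ L²γ/(16ε²) and B ≥ L/(2ε), summing the per-step energy dissipation law of the SL-CN scheme gives, for every N ≥ 1: E_CN^{N+1} + ∑_{n=1}^{N} [ (2√(A/γ) − L/(2ε))‖δ_tφ^{n+1}‖² + (B/2 − L/(4ε))‖δ_{tt}φ^{n+1}‖² ] ≤ E_CN^1. In particular E_CN^{N+1} ≤ E_CN^1 for all N ≥ 1. -/

import Mathlib

/-!
Test the scheme with `δ = φⁿ⁺¹ - φⁿ`. The Crank–Nicolson average turns `ε ⟨K φ^{n+1/2}, δ⟩`
into the exact increment of the quadratic part of the energy. The explicit nonlinear term is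
compared with `F(φⁿ⁺¹) - F(φⁿ)` by two second-order Taylor expansions about the extrapolated point
`(3/2)φⁿ - (1/2)φⁿ⁻¹`, at the price of `L/(4ε) (‖δ‖² + ‖δ_tt‖²) + L/(8ε) ‖φⁿ - φⁿ⁻¹‖²`. The `B`-term
is a difference of squares plus `B/2 ‖δ_tt‖²`. Finally `δ = -τγ K μ`, so positivity of `K` at
`μ + √(A/γ) δ` gives `τγ ⟨K μ, μ⟩ + Aτ ⟨K δ, δ⟩ ≥ 2 √(A/γ) ‖δ‖²`. This is a per-step dissipation
law, whose dissipation is nonnegative under the conditions on `A` and `B`; it telescopes.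
-/

open scoped RealInnerProductSpace
open Finset

theorem abs_sub_sub_deriv_mul_le {F : ℝ → ℝ} (hF : ContDiff ℝ 2 F) {L : ℝ}
    (hF'' : ∀ x, |deriv (deriv F) x| ≤ L) (x y : ℝ) :
    |F x - F y - deriv F y * (x - y)| ≤ L / 2 * (x - y) ^ 2 := by
  rcases eq_or_ne y x with rfl | hne
  · simp
  obtain ⟨ξ, -, hξ⟩ := taylor_mean_remainder_lagrange_iteratedDeriv (n := 1) hne hF.contDiffOn
  have hderiv : derivWithin F (Set.uIcc y x) y = deriv F y :=
    (hF.differentiable two_ne_zero y).derivWithin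
      (uniqueDiffOn_uIcc hne y Set.left_mem_uIcc)
  simp only [taylorWithinEval_succ, taylor_within_zero_eval, zero_add, iteratedDerivWithin_one,
    hderiv, iteratedDeriv_succ, iteratedDeriv_zero] at hξ
  norm_num [Nat.factorial] at hξ
  have hrem : F x - F y - deriv F y * (x - y) = deriv (deriv F) ξ / 2 * (x - y) ^ 2 := by
    linear_combination hξ
  rw [hrem, abs_mul, abs_div, abs_two, abs_of_nonneg (sq_nonneg (x - y))]
  gcongr
  exact hF'' ξ

theorem sub_le_deriv_extrapolate_mul {F : ℝ → ℝ} (hF : ContDiff ℝ 2 F) {L : ℝ}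
    (hF'' : ∀ x, |deriv (deriv F) x| ≤ L) (a b c : ℝ) :
    F b - F a ≤ deriv F (3/2 * a - 1/2 * c) * (b - a)
      + L/4 * (b - a)^2 + L/4 * (b - 2*a + c)^2 + L/8 * (a - c)^2 := by
  have hL : 0 ≤ L := (abs_nonneg _).trans (hF'' 0)
  have hb := (abs_le.mp (abs_sub_sub_deriv_mul_le hF hF'' b (3/2 * a - 1/2 * c))).2
  have ha := (abs_le.mp (abs_sub_sub_deriv_mul_le hF hF'' a (3/2 * a - 1/2 * c))).1
  nlinarith [mul_nonneg hL (sq_nonneg ((b - a) - (b - 2*a + c)))]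

theorem sum_sub_sum_le_inner_deriv_extrapolate {ι : Type*} [Fintype ι] {F : ℝ → ℝ}
    (hF : ContDiff ℝ 2 F) {L : ℝ} (hF'' : ∀ x, |deriv (deriv F) x| ≤ L)
    (a b c : EuclideanSpace ℝ ι) :
    ∑ i, F (b i) - ∑ i, F (a i) ≤
      ⟪(WithLp.equiv 2 (ι → ℝ)).symm (fun i => deriv F (3/2 * a i - 1/2 * c i)), b - a⟫
        + L/4 * ‖b - a‖^2 + L/4 * ‖b - (2:ℝ) • a + c‖^2 + L/8 * ‖a - c‖^2 := by
  simp only [EuclideanSpace.norm_sq_eq, Real.norm_eq_abs, sq_abs, PiLp.inner_apply,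
    WithLp.equiv_symm_apply, PiLp.sub_apply, PiLp.add_apply, PiLp.smul_apply,
    smul_eq_mul, RCLike.inner_apply, conj_trivial, mul_sum, ← sum_sub_distrib, ← sum_add_distrib]
  refine sum_le_sum fun i _ => ?_
  linarith [sub_le_deriv_extrapolate_mul hF hF'' (a i) (b i) (c i)]

section SymmetricOperator

variable {E : Type*} [NormedAddCommGroup E] [InnerProductSpace ℝ E] {K : E →ₗ[ℝ] E}

theorem LinearMap.IsSymmetric.inner_map_midpoint_sub (hK : K.IsSymmetric) (x y : E) :
    ⟪K ((1/2 : ℝ) • (x + y)), x - y⟫ = (⟪K x, x⟫ - ⟪K y, y⟫) / 2 := by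
  rw [map_smul, real_inner_smul_left, map_add, inner_add_left, inner_sub_right, inner_sub_right,
    hK x y, real_inner_comm x (K y)]
  ring

theorem real_inner_second_difference (x y z : E) :
    ⟪x - (2:ℝ) • y + z, x - y⟫ = (‖x - y‖^2 - ‖y - z‖^2 + ‖x - (2:ℝ) • y + z‖^2) / 2 := by
  rw [show x - (2:ℝ) • y + z = (x - y) - (y - z) by module, norm_sub_sq_real (x - y) (y - z),
    inner_sub_left, real_inner_self_eq_norm_sq, real_inner_comm]
  ring

theorem two_mul_norm_sq_le_of_eq_neg_smul (hK : K.IsSymmetric) (hKpos : ∀ x, 0 ≤ ⟪K x, x⟫)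
    {t : ℝ} (ht : 0 ≤ t) (s : ℝ) {μ δ : E} (hδ : δ = -t • K μ) :
    2 * s * ‖δ‖^2 ≤ t * ⟪K μ, μ⟫ + t * s^2 * ⟪K δ, δ⟫ := by
  have hpos := mul_nonneg ht (hKpos (μ + s • δ))
  have hcross : t * ⟪K μ, δ⟫ = -‖δ‖^2 := by
    rw [← real_inner_smul_left, ← real_inner_self_eq_norm_sq, ← inner_neg_left, hδ, neg_smul,
      neg_neg]
  simp only [map_add, map_smul, inner_add_left, inner_add_right, real_inner_smul_left,
    real_inner_smul_right] at hpos
  rw [hK δ μ, real_inner_comm (K μ) δ] at hpos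
  linear_combination hpos + 2 * s * hcross

end SymmetricOperator

theorem add_sum_Icc_le_of_succ_add_le {α : Type*} [AddCommMonoid α] [PartialOrder α]
    [IsOrderedAddMonoid α] {a d : ℕ → α} (h : ∀ n, 1 ≤ n → a (n + 1) + d n ≤ a n) (N : ℕ) :
    a (N + 1) + ∑ n ∈ Icc 1 N, d n ≤ a 1 := by
  induction N with
  | zero => simp
  | succ N ih =>
    calc a (N + 1 + 1) + ∑ n ∈ Icc 1 (N + 1), d n
        = (a (N + 1 + 1) + d (N + 1)) + ∑ n ∈ Icc 1 N, d n := by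
          rw [sum_Icc_succ_top (by omega)]
          abel
      _ ≤ a (N + 1) + ∑ n ∈ Icc 1 N, d n := by gcongr; exact h _ (by omega)
      _ ≤ a 1 := ih

theorem div_le_two_mul_sqrt_of_sq_mul_div_le {L γ ε A : ℝ} (hL : 0 ≤ L) (hγ : 0 < γ)
    (hε : 0 < ε) (hA : L ^ 2 * γ / (16 * ε ^ 2) ≤ A) : L / (2 * ε) ≤ 2 * √(A / γ) := by
  have hsq : (L / (4 * ε)) ^ 2 ≤ A / γ := by
    rw [le_div_iff₀ hγ]
    calc (L / (4 * ε)) ^ 2 * γ = L ^ 2 * γ / (16 * ε ^ 2) := by ring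
      _ ≤ A := hA
  have := (Real.le_sqrt (div_nonneg hL (by positivity)) ((sq_nonneg _).trans hsq)).mpr hsq
  linarith [show L / (2 * ε) = 2 * (L / (4 * ε)) by ring]

section Energy

variable {ι : Type*} [Fintype ι]

noncomputable def chEnergy (K : EuclideanSpace ℝ ι →ₗ[ℝ] EuclideanSpace ℝ ι) (F : ℝ → ℝ) (ε : ℝ)
    (φ : EuclideanSpace ℝ ι) : ℝ :=
  ε / 2 * ⟪K φ, φ⟫ + 1 / ε * ∑ i, F (φ i)

/-- `cnEnergy K F ε L B φⁿ φⁿ⁺¹` is the modified energy `E_CN^{n+1}`. -/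
noncomputable def cnEnergy (K : EuclideanSpace ℝ ι →ₗ[ℝ] EuclideanSpace ℝ ι) (F : ℝ → ℝ)
    (ε L B : ℝ) (φ₀ φ₁ : EuclideanSpace ℝ ι) : ℝ :=
  chEnergy K F ε φ₁ + (L / (4 * ε) + B / 2) * ‖φ₁ - φ₀‖ ^ 2

noncomputable def cnDissipation (γ ε L A B : ℝ) (φ₀ φ₁ φ₂ : EuclideanSpace ℝ ι) : ℝ :=
  (2 * √(A / γ) - L / (2 * ε)) * ‖φ₂ - φ₁‖ ^ 2
    + (B / 2 - L / (4 * ε)) * ‖φ₂ - (2:ℝ) • φ₁ + φ₀‖ ^ 2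

theorem cnEnergy_add_cnDissipation_le {K : EuclideanSpace ℝ ι →ₗ[ℝ] EuclideanSpace ℝ ι}
    (hK : K.IsSymmetric) (hKpos : ∀ x, 0 ≤ ⟪K x, x⟫) {F : ℝ → ℝ} (hF : ContDiff ℝ 2 F) {L : ℝ}
    (hL : 0 ≤ L) (hF'' : ∀ x, |deriv (deriv F) x| ≤ L) {τ γ ε A B : ℝ} (hτ : 0 < τ) (hγ : 0 < γ)
    (hε : 0 < ε) (hA : 0 ≤ A) {φ₀ φ₁ φ₂ μ : EuclideanSpace ℝ ι}
    (hφ : (1 / τ) • (φ₂ - φ₁) = -γ • K μ)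
    (hμ : μ = ε • K ((1 / 2 : ℝ) • (φ₂ + φ₁)) +
      (1 / ε) • (WithLp.equiv 2 (ι → ℝ)).symm (fun i => deriv F (3/2 * φ₁ i - 1/2 * φ₀ i)) +
      (A * τ) • K (φ₂ - φ₁) + B • (φ₂ - (2:ℝ) • φ₁ + φ₀)) :
    cnEnergy K F ε L B φ₁ φ₂ + cnDissipation γ ε L A B φ₀ φ₁ φ₂ ≤ cnEnergy K F ε L B φ₀ φ₁ := by
  have hδ : φ₂ - φ₁ = -(τ * γ) • K μ := by
    calc φ₂ - φ₁ = τ • ((1 / τ) • (φ₂ - φ₁)) := by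
          rw [smul_smul, mul_one_div_cancel hτ.ne', one_smul]
      _ = -(τ * γ) • K μ := by rw [hφ]; module
  have hμδ : ⟪μ, φ₂ - φ₁⟫ = -(τ * γ) * ⟪K μ, μ⟫ := by
    rw [hδ, real_inner_smul_right, real_inner_comm]
  have hstab := two_mul_norm_sq_le_of_eq_neg_smul hK hKpos (by positivity) √(A / γ) hδ
  have hsA : τ * γ * √(A / γ) ^ 2 = A * τ := by
    rw [Real.sq_sqrt (div_nonneg hA hγ.le)]
    field_simp
  rw [hsA] at hstab
  have hexpand : ⟪μ, φ₂ - φ₁⟫ = ε * ((⟪K φ₂, φ₂⟫ - ⟪K φ₁, φ₁⟫) / 2)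
      + 1 / ε * ⟪(WithLp.equiv 2 (ι → ℝ)).symm (fun i => deriv F (3/2 * φ₁ i - 1/2 * φ₀ i)),
          φ₂ - φ₁⟫
      + A * τ * ⟪K (φ₂ - φ₁), φ₂ - φ₁⟫
      + B * ((‖φ₂ - φ₁‖^2 - ‖φ₁ - φ₀‖^2 + ‖φ₂ - (2:ℝ) • φ₁ + φ₀‖^2) / 2) := by
    rw [hμ]
    simp only [inner_add_left, real_inner_smul_left, hK.inner_map_midpoint_sub]
    rw [← inner_add_left, real_inner_second_difference]
  have hnonlin := mul_le_mul_of_nonneg_left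
    (sum_sub_sum_le_inner_deriv_extrapolate hF hF'' φ₁ φ₂ φ₀) (one_div_nonneg.mpr hε.le)
  have hslack : 0 ≤ L / (8 * ε) * ‖φ₁ - φ₀‖ ^ 2 :=
    mul_nonneg (div_nonneg hL (by positivity)) (sq_nonneg _)
  unfold cnEnergy chEnergy cnDissipation
  linear_combination hnonlin + hstab + hslack - hexpand + hμδ

theorem cnDissipation_nonneg {γ ε L A B : ℝ} (hL : 0 ≤ L) (hγ : 0 < γ) (hε : 0 < ε)
    (hA : L ^ 2 * γ / (16 * ε ^ 2) ≤ A) (hB : L / (2 * ε) ≤ B) (φ₀ φ₁ φ₂ : EuclideanSpace ℝ ι) :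
    0 ≤ cnDissipation γ ε L A B φ₀ φ₁ φ₂ := by
  have h1 := div_le_two_mul_sqrt_of_sq_mul_div_le hL hγ hε hA
  have h2 : L / (4 * ε) ≤ B / 2 := by linarith [show L / (2 * ε) = 2 * (L / (4 * ε)) by ring]
  unfold cnDissipation
  exact add_nonneg (mul_nonneg (by linarith) (sq_nonneg _))
    (mul_nonneg (by linarith) (sq_nonneg _))

end Energy

theorem stmt_3_general {M : ℕ}
    (K : EuclideanSpace ℝ (Fin M) →ₗ[ℝ] EuclideanSpace ℝ (Fin M))
    (hKsa : ∀ x y : EuclideanSpace ℝ (Fin M), ⟪K x, y⟫ = ⟪x, K y⟫)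
    (hKpsd : ∀ x : EuclideanSpace ℝ (Fin M), 0 ≤ ⟪K x, x⟫)
    (F : ℝ → ℝ) (hF : ContDiff ℝ 2 F)
    (L : ℝ) (hL : 0 ≤ L) (hf' : ∀ x : ℝ, |deriv (deriv F) x| ≤ L)
    (τ γ ε : ℝ) (hτ : 0 < τ) (hγ : 0 < γ) (hε : 0 < ε)
    (A B : ℝ) (hA : 0 ≤ A)
    (φ μc : ℕ → EuclideanSpace ℝ (Fin M))
    (hscheme1 : ∀ n, 1 ≤ n → (1/τ) • (φ (n+1) - φ n) = -γ • K (μc n))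
    (hscheme2 : ∀ n, 1 ≤ n → μc n =
      ε • K ((1/2 : ℝ) • (φ (n+1) + φ n)) +
      (1/ε) • ((WithLp.equiv 2 (Fin M → ℝ)).symm
          (fun i => deriv F ((3/2) * φ n i - (1/2) * φ (n-1) i))) +
      (A * τ) • K (φ (n+1) - φ n) +
      B • (φ (n+1) - (2:ℝ) • φ n + φ (n-1)))
    (hAcond : A ≥ L^2 * γ / (16 * ε^2)) (hBcond : B ≥ L / (2 * ε)) :
    ∀ N, 1 ≤ N →
      ((ε/2) * ⟪K (φ (N+1)), φ (N+1)⟫ + (1/ε) * ∑ i, F (φ (N+1) i)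
          + (L/(4*ε) + B/2) * ‖φ (N+1) - φ N‖^2
        + ∑ n ∈ Finset.Icc 1 N,
            ((2 * Real.sqrt (A/γ) - L/(2*ε)) * ‖φ (n+1) - φ n‖^2
              + (B/2 - L/(4*ε)) * ‖φ (n+1) - (2:ℝ) • φ n + φ (n-1)‖^2)
        ≤ (ε/2) * ⟪K (φ 1), φ 1⟫ + (1/ε) * ∑ i, F (φ 1 i)
          + (L/(4*ε) + B/2) * ‖φ 1 - φ 0‖^2)
      ∧
      ((ε/2) * ⟪K (φ (N+1)), φ (N+1)⟫ + (1/ε) * ∑ i, F (φ (N+1) i)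
          + (L/(4*ε) + B/2) * ‖φ (N+1) - φ N‖^2
        ≤ (ε/2) * ⟪K (φ 1), φ 1⟫ + (1/ε) * ∑ i, F (φ 1 i)
          + (L/(4*ε) + B/2) * ‖φ 1 - φ 0‖^2) := by
  intro N hN
  have htel := add_sum_Icc_le_of_succ_add_le
    (a := fun n => cnEnergy K F ε L B (φ (n - 1)) (φ n))
    (d := fun n => cnDissipation γ ε L A B (φ (n - 1)) (φ n) (φ (n + 1)))
    (fun n hn => by
      simpa only [Nat.add_sub_cancel] using
        cnEnergy_add_cnDissipation_le hKsa hKpsd hF hL hf' hτ hγ hε hA (hscheme1 n hn)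
          (hscheme2 n hn)) N
  have hdiss : 0 ≤ ∑ n ∈ Icc 1 N, cnDissipation γ ε L A B (φ (n - 1)) (φ n) (φ (n + 1)) :=
    sum_nonneg fun n _ => cnDissipation_nonneg hL hγ hε hAcond hBcond _ _ _
  exact ⟨htel, (le_add_of_nonneg_right hdiss).trans htel⟩

/-- Summed discrete energy dissipation law (equation (2.15)) for the stabilized linear
Crank–Nicolson (SL-CN) scheme: under the stabilization conditions `A ≥ L²γ/(16ε²)` and
`B ≥ L/(2ε)`, telescoping the per-step dissipation law gives a global energy bound. -/
theorem stmt_3 {M : ℕ}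
    (K : EuclideanSpace ℝ (Fin M) →ₗ[ℝ] EuclideanSpace ℝ (Fin M))
    (hKsa : ∀ x y : EuclideanSpace ℝ (Fin M), ⟪K x, y⟫ = ⟪x, K y⟫)
    (hKpsd : ∀ x : EuclideanSpace ℝ (Fin M), 0 ≤ ⟪K x, x⟫)
    (F : ℝ → ℝ) (hF : ContDiff ℝ 2 F)
    (L : ℝ) (hL : 0 ≤ L) (hf' : ∀ x : ℝ, |deriv (deriv F) x| ≤ L)
    (τ γ ε : ℝ) (hτ : 0 < τ) (hγ : 0 < γ) (hε : 0 < ε)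
    (A B : ℝ) (hA : 0 ≤ A) (hB : 0 ≤ B)
    (φ μc : ℕ → EuclideanSpace ℝ (Fin M))
    (hscheme1 : ∀ n, 1 ≤ n → (1/τ) • (φ (n+1) - φ n) = -γ • K (μc n))
    (hscheme2 : ∀ n, 1 ≤ n → μc n =
      ε • K ((1/2 : ℝ) • (φ (n+1) + φ n)) +
      (1/ε) • ((WithLp.equiv 2 (Fin M → ℝ)).symm
          (fun i => deriv F ((3/2) * φ n i - (1/2) * φ (n-1) i))) +
      (A * τ) • K (φ (n+1) - φ n) +
      B • (φ (n+1) - (2:ℝ) • φ n + φ (n-1)))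
    (hAcond : A ≥ L^2 * γ / (16 * ε^2)) (hBcond : B ≥ L / (2 * ε)) :
    ∀ N, 1 ≤ N →
      ((ε/2) * ⟪K (φ (N+1)), φ (N+1)⟫ + (1/ε) * ∑ i, F (φ (N+1) i)
          + (L/(4*ε) + B/2) * ‖φ (N+1) - φ N‖^2
        + ∑ n ∈ Finset.Icc 1 N,
            ((2 * Real.sqrt (A/γ) - L/(2*ε)) * ‖φ (n+1) - φ n‖^2
              + (B/2 - L/(4*ε)) * ‖φ (n+1) - (2:ℝ) • φ n + φ (n-1)‖^2)
        ≤ (ε/2) * ⟪K (φ 1), φ 1⟫ + (1/ε) * ∑ i, F (φ 1 i)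
          + (L/(4*ε) + B/2) * ‖φ 1 - φ 0‖^2)
      ∧
      ((ε/2) * ⟪K (φ (N+1)), φ (N+1)⟫ + (1/ε) * ∑ i, F (φ (N+1) i)
          + (L/(4*ε) + B/2) * ‖φ (N+1) - φ N‖^2
        ≤ (ε/2) * ⟪K (φ 1), φ 1⟫ + (1/ε) * ∑ i, F (φ 1 i)
          + (L/(4*ε) + B/2) * ‖φ 1 - φ 0‖^2) :=
  stmt_3_general K hKsa hKpsd F hF L hL hf' τ γ ε hτ hγ hε A B hA φ μc hscheme1 hscheme2 hAcond
    hBcond
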